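/- (Proposition 1.) Suppose u⁰_h, u¹_h ∈ 𝐏₀ ∩ RT₀, p¹_h ∈ P₁^{nc} with ∫_Ω p¹_h dx = 0, and for n = 1, …, N−1 the triples (ũⁿ⁺¹_h, pⁿ⁺¹_h, uⁿ⁺¹_h) satisfy the projection scheme (prediction equation, pressure equation, and velocity correction uⁿ⁺¹_h = ũⁿ⁺¹_h − (2k/3) ∇_h(pⁿ⁺¹_h − pⁿ_h)). Then uᵐ_h ∈ RT₀ for every m ∈ {0, …, N}. -/

import Mathlib

noncomputable section

open MeasureTheory Finset
open scoped Classical ENNReal Topology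

/-- The Euclidean plane. -/
abbrev E2 : Type := EuclideanSpace ℝ (Fin 2)

/-- The closed triangle spanned by the three vertices. -/
def triSet (v : Fin 3 → E2) : Set E2 := convexHull ℝ (Set.range v)

/-- The three edges of a triangle, each encoded as the two-element set of its endpoints. -/
def triEdges (v : Fin 3 → E2) : Finset (Finset E2) :=
  {({v 0, v 1} : Finset E2), ({v 1, v 2} : Finset E2), ({v 0, v 2} : Finset E2)}

/-- The closed segment of an edge. -/
def edgeSet (σ : Finset E2) : Set E2 := convexHull ℝ (σ : Set E2)

/-- The length of an edge. -/
def edgeLen (σ : Finset E2) : ℝ := Metric.diam (σ : Set E2)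

/-- The midpoint of an edge. -/
def edgeMid (σ : Finset E2) : E2 := (2⁻¹ : ℝ) • ∑ x ∈ σ, x

/-- The area `|K|` of a triangle. -/
def triArea (v : Fin 3 → E2) : ℝ := (volume (triSet v)).toReal

/-- A conforming triangulation of the closure of `Ω` (a finite set of nondegenerate
closed triangles covering `closure Ω`, two distinct triangles meeting in nothing, a common
vertex or a common edge, each edge lying in at most two triangles and the edges lying
in a single triangle being contained in the boundary of `Ω`), together with the
circumcenters (assumed to lie inside the triangles, which encodes the hypothesis that
all interior angles are at most `π/2`) and the outward unit normal vectors. -/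
structure FVMesh (Ω : Set E2) : Type where
  tris : Finset (Fin 3 → E2)
  indep : ∀ v ∈ tris, AffineIndependent ℝ v
  cover : (⋃ v ∈ tris, triSet v) = closure Ω
  conform : ∀ v ∈ tris, ∀ w ∈ tris, v ≠ w →
      triSet v ∩ triSet w = ∅ ∨
      (∃ p, p ∈ Set.range v ∧ p ∈ Set.range w ∧ triSet v ∩ triSet w = {p}) ∨
      (∃ σ, σ ∈ triEdges v ∧ σ ∈ triEdges w ∧ triSet v ∩ triSet w = edgeSet σ)
  edge_count : ∀ v ∈ tris, ∀ σ ∈ triEdges v,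
      (tris.filter fun w => σ ∈ triEdges w).card = 1 ∨
      (tris.filter fun w => σ ∈ triEdges w).card = 2
  bdry_edge : ∀ v ∈ tris, ∀ σ ∈ triEdges v,
      (tris.filter fun w => σ ∈ triEdges w).card = 1 → edgeSet σ ⊆ frontier Ω
  circ : (Fin 3 → E2) → E2
  circ_equidist : ∀ v ∈ tris, ∀ i j : Fin 3, dist (circ v) (v i) = dist (circ v) (v j)
  circ_mem : ∀ v ∈ tris, circ v ∈ triSet v
  nrm : (Fin 3 → E2) → Finset E2 → E2
  nrm_unit : ∀ v ∈ tris, ∀ σ ∈ triEdges v, ‖nrm v σ‖ = 1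
  nrm_orth : ∀ v ∈ tris, ∀ σ ∈ triEdges v, ∀ a ∈ σ, ∀ b ∈ σ,
      (inner ℝ (nrm v σ) (a - b) : ℝ) = 0
  nrm_outward : ∀ v ∈ tris, ∀ σ ∈ triEdges v, ∀ x ∈ triSet v,
      (inner ℝ (nrm v σ) (x - edgeMid σ) : ℝ) ≤ 0

/-- A `𝐏₀` (piecewise constant, vector valued) function, encoded by its constant
value on each triangle. -/
abbrev P0fun : Type := (Fin 3 → E2) → E2

/-- A broken scalar function: one function of the space variable for each triangle. -/
abbrev BrokenS : Type := (Fin 3 → E2) → E2 → ℝ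

/-- A broken vector-valued function. -/
abbrev BrokenV : Type := (Fin 3 → E2) → E2 → E2

def IsAffineS (g : E2 → ℝ) : Prop := ∃ φ : E2 →ᵃ[ℝ] ℝ, g = ⇑φ

def IsAffineV (g : E2 → E2) : Prop := ∃ φ : E2 →ᵃ[ℝ] E2, g = ⇑φ

/-- The (classical) divergence of a vector field on the plane. -/
def divF (g : E2 → E2) (x : E2) : ℝ :=
  ∑ i : Fin 2, fderiv ℝ g x (EuclideanSpace.single i 1) i

/-- The (classical) vector Laplacian of a vector field on the plane. -/
def vecLap (g : E2 → E2) (x : E2) : E2 :=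
  ∑ i : Fin 2,
    fderiv ℝ (fderiv ℝ g) x (EuclideanSpace.single i 1) (EuclideanSpace.single i 1)

/-- The squared `H¹(Ω)` norm of a vector field. -/
def sobH1Sq (Ω : Set E2) (g : E2 → E2) : ℝ :=
  ∫ x in Ω, (‖g x‖ ^ 2 + ‖fderiv ℝ g x‖ ^ 2)

/-- The squared `H²(Ω)` norm of a vector field. -/
def sobH2Sq (Ω : Set E2) (g : E2 → E2) : ℝ :=
  ∫ x in Ω, (‖g x‖ ^ 2 + ‖fderiv ℝ g x‖ ^ 2 + ‖fderiv ℝ (fderiv ℝ g) x‖ ^ 2)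

/-- The squared `H²(Ω)` norm of a scalar function. -/
def sobH2SqS (Ω : Set E2) (q : E2 → ℝ) : ℝ :=
  ∫ x in Ω, (q x ^ 2 + ‖fderiv ℝ q x‖ ^ 2 + ‖fderiv ℝ (fderiv ℝ q) x‖ ^ 2)

namespace FVMesh

variable {Ω : Set E2} (M : FVMesh Ω)

/-- The set of all edges of the mesh. -/
def edges : Finset (Finset E2) := M.tris.biUnion triEdges

/-- An interior edge: an edge shared by exactly two triangles. -/
def isIntEdge (σ : Finset E2) : Prop :=
  σ ∈ M.edges ∧ (M.tris.filter fun w => σ ∈ triEdges w).card = 2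

/-- A boundary edge: an edge belonging to exactly one triangle. -/
def isExtEdge (σ : Finset E2) : Prop :=
  σ ∈ M.edges ∧ (M.tris.filter fun w => σ ∈ triEdges w).card = 1

def intEdges : Finset (Finset E2) := M.edges.filter fun σ => M.isIntEdge σ

def extEdges : Finset (Finset E2) := M.edges.filter fun σ => M.isExtEdge σ

/-- `K_σ` : a triangle having `σ` as one of its edges. -/
def Kof (σ : Finset E2) : Fin 3 → E2 :=
  if h : ∃ v, v ∈ M.tris ∧ σ ∈ triEdges v then h.choose else fun _ => 0

/-- The triangle on the other side of the edge `σ` of `K` (for an interior edge). -/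
def nbr (σ : Finset E2) (K : Fin 3 → E2) : Fin 3 → E2 :=
  if h : ∃ w, w ∈ M.tris ∧ σ ∈ triEdges w ∧ w ≠ K then h.choose else K

/-- `L_σ` : the second triangle having an interior edge `σ` as one of its edges. -/
def Lof (σ : Finset E2) : Fin 3 → E2 := M.nbr σ (M.Kof σ)

/-- The circumradius of a triangle. -/
def circumradius (v : Fin 3 → E2) : ℝ := dist (M.circ v) (v 0)

/-- `h` : the maximal circumradius of the triangles of the mesh. -/
def meshSize : ℝ := ⨆ v : M.tris, M.circumradius v

/-- `d_σ`. -/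
def dEdge (σ : Finset E2) : ℝ :=
  if M.isIntEdge σ then dist (M.circ (M.Kof σ)) (M.circ (M.Lof σ))
  else dist (edgeMid σ) (M.circ (M.Kof σ))

/-- `τ_σ = |σ| / d_σ`. -/
def tauEdge (σ : Finset E2) : ℝ := edgeLen σ / M.dEdge σ

/-- Mesh regularity with constant `C₀` : `dist(x_{K_σ}, σ) ≥ C₀ |σ|` and `|σ| ≥ C₀ h`. -/
def regular (C₀ : ℝ) : Prop :=
  ∀ σ ∈ M.edges,
    C₀ * edgeLen σ ≤ Metric.infDist (M.circ (M.Kof σ)) (edgeSet σ) ∧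
    C₀ * M.meshSize ≤ edgeLen σ

/-- The square of the discrete `H¹` norm `‖·‖_h` on `𝐏₀`. -/
def normhSq (c : P0fun) : ℝ :=
  ∑ σ ∈ M.intEdges, M.tauEdge σ * ‖c (M.Lof σ) - c (M.Kof σ)‖ ^ 2
    + ∑ σ ∈ M.extEdges, M.tauEdge σ * ‖c (M.Kof σ)‖ ^ 2

/-- The discrete `H¹` norm `‖·‖_h` on `𝐏₀`. -/
def normh (c : P0fun) : ℝ := Real.sqrt (M.normhSq c)

/-- The `L²(Ω)` inner product of two `𝐏₀` functions. -/
def innerP0 (c d : P0fun) : ℝ := ∑ K ∈ M.tris, triArea K * (inner ℝ (c K) (d K) : ℝ)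

/-- The `L²(Ω)` norm of a `𝐏₀` function. -/
def normL2P0 (c : P0fun) : ℝ := Real.sqrt (∑ K ∈ M.tris, triArea K * ‖c K‖ ^ 2)

/-- The dual norm `‖·‖_{-1,h}` on `𝐏₀`. -/
def normDual (c : P0fun) : ℝ :=
  sSup { r : ℝ | ∃ ψ : P0fun, M.normh ψ ≠ 0 ∧ r = M.innerP0 c ψ / M.normh ψ }

/-- The discrete Laplacian `Δ̃_h` on `𝐏₀`. -/
def discLap (c : P0fun) : P0fun := fun K =>
  (triArea K)⁻¹ •
    ((∑ σ ∈ (triEdges K).filter (fun σ => M.isIntEdge σ),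
        M.tauEdge σ • (c (M.nbr σ K) - c K))
      - ∑ σ ∈ (triEdges K).filter (fun σ => M.isExtEdge σ), M.tauEdge σ • c K)

/-- The value of the discrete divergence `div_h c` at the midpoint of the edge `σ`. -/
def divhVal (c : P0fun) (σ : Finset E2) : ℝ :=
  if M.isIntEdge σ then
    (3 * edgeLen σ / (triArea (M.Kof σ) + triArea (M.Lof σ))) *
      (inner ℝ (c (M.Lof σ) - c (M.Kof σ)) (M.nrm (M.Kof σ) σ) : ℝ)
  else
    -(3 * edgeLen σ / triArea (M.Kof σ)) * (inner ℝ (c (M.Kof σ)) (M.nrm (M.Kof σ) σ) : ℝ)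

/-- Membership in the Crouzeix–Raviart space `P₁^{nc}` (scalar case): piecewise affine,
continuous at the midpoints of interior edges. -/
def IsCR (q : BrokenS) : Prop :=
  (∀ K ∈ M.tris, IsAffineS (q K)) ∧
  ∀ σ ∈ M.intEdges, q (M.Kof σ) (edgeMid σ) = q (M.Lof σ) (edgeMid σ)

/-- Membership in `𝐏₁^{nc} = (P₁^{nc})²`. -/
def IsCRV (q : BrokenV) : Prop :=
  (∀ K ∈ M.tris, IsAffineV (q K)) ∧
  ∀ σ ∈ M.intEdges, q (M.Kof σ) (edgeMid σ) = q (M.Lof σ) (edgeMid σ)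

/-- `D` is the Crouzeix–Raviart function `div_h c`. -/
def IsDivh (c : P0fun) (D : BrokenS) : Prop :=
  M.IsCR D ∧ ∀ K ∈ M.tris, ∀ σ ∈ triEdges K, D K (edgeMid σ) = M.divhVal c σ

/-- Membership in the lowest-order Raviart–Thomas space `RT₀`: on each triangle of the
form `a_K + b_K x`, normal component continuous across interior edges, and vanishing
normal component on the boundary. -/
def IsRT0 (w : BrokenV) : Prop :=
  (∀ K ∈ M.tris, ∃ a : E2, ∃ b : ℝ, w K = fun x => a + b • x) ∧
  (∀ σ ∈ M.intEdges, ∀ x ∈ edgeSet σ,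
    (inner ℝ (w (M.Kof σ) x) (M.nrm (M.Kof σ) σ) : ℝ) =
      inner ℝ (w (M.Lof σ) x) (M.nrm (M.Kof σ) σ)) ∧
  (∀ σ ∈ M.extEdges, ∀ x ∈ edgeSet σ,
    (inner ℝ (w (M.Kof σ) x) (M.nrm (M.Kof σ) σ) : ℝ) = 0)

/-- Membership of a `𝐏₀` function in `𝐏₀ ∩ RT₀` : the normal component of the
piecewise-constant field is continuous across interior edges and vanishes on boundary
edges. -/
def P0inRT0 (c : P0fun) : Prop :=
  (∀ σ ∈ M.intEdges,
    (inner ℝ (c (M.Kof σ)) (M.nrm (M.Kof σ) σ) : ℝ) =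
      inner ℝ (c (M.Lof σ)) (M.nrm (M.Kof σ) σ)) ∧
  (∀ σ ∈ M.extEdges, (inner ℝ (c (M.Kof σ)) (M.nrm (M.Kof σ) σ) : ℝ) = 0)

/-- The discrete gradient `∇_h` of a broken affine (Crouzeix–Raviart) function:
on each triangle, the (constant) gradient of the affine piece. -/
def gradh (q : BrokenS) : P0fun := fun K => gradient (q K) (M.circ K)

/-- The upwind convection term `b̃_h(d, c)` for a convecting field `d ∈ 𝐏₀ ∩ RT₀`. -/
def btilde (d c : P0fun) : P0fun := fun K =>
  (triArea K)⁻¹ •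
    ∑ σ ∈ (triEdges K).filter (fun σ => M.isIntEdge σ),
      edgeLen σ • ((max (inner ℝ (d K) (M.nrm K σ) : ℝ) 0) • c K
        + (min (inner ℝ (d K) (M.nrm K σ) : ℝ) 0) • c (M.nbr σ K))

/-- The trilinear form `b_h` for a convecting field in `𝐏₀ ∩ RT₀`. -/
def bform (d c w : P0fun) : ℝ :=
  ∑ K ∈ M.tris, triArea K * (inner ℝ (w K) (M.btilde d c K) : ℝ)

/-- The upwind convection term `b̃_h(u, c)` for a convecting field `u ∈ RT₀`. -/
def btildeRT (u : BrokenV) (c : P0fun) : P0fun := fun K =>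
  (triArea K)⁻¹ •
    ∑ σ ∈ (triEdges K).filter (fun σ => M.isIntEdge σ),
      edgeLen σ • ((max (inner ℝ (u K (edgeMid σ)) (M.nrm K σ) : ℝ) 0) • c K
        + (min (inner ℝ (u K (edgeMid σ)) (M.nrm K σ) : ℝ) 0) • c (M.nbr σ K))

/-- The trilinear form `b_h`. -/
def bformRT (u : BrokenV) (c w : P0fun) : ℝ :=
  ∑ K ∈ M.tris, triArea K * (inner ℝ (w K) (M.btildeRT u c K) : ℝ)

/-- The `L²(Ω)` norm of the piecewise-constant projection error `v - Π̃_{𝐏₀} v`,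
where `(Π̃_{𝐏₀} v)|_K = v(x_K)`. -/
def errTildeP0 (g : E2 → E2) : ℝ :=
  Real.sqrt (∑ K ∈ M.tris, ∫ x in triSet K, ‖g x - g (M.circ K)‖ ^ 2)

end FVMesh


/-- The projection scheme of the paper: initialization, momentum (prediction) step,
pressure (projection) step and velocity correction, for `n = 1, …, N-1`. -/
def projScheme {Ω : Set E2} (M : FVMesh Ω) (N : ℕ) (k Re : ℝ) (f : ℝ → E2 → E2)
    (u ut : ℕ → P0fun) (p : ℕ → BrokenS) : Prop :=
  M.P0inRT0 (u 0) ∧ M.P0inRT0 (u 1) ∧ M.IsCR (p 1) ∧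
  (∑ K ∈ M.tris, ∫ x in triSet K, p 1 K x) = 0 ∧
  ut 1 = u 1 ∧
  ∀ n, 1 ≤ n → n + 1 ≤ N →
    (∀ K ∈ M.tris,
      (2 * k)⁻¹ • ((3:ℝ) • ut (n+1) K - (4:ℝ) • u n K + u (n-1) K)
        - Re⁻¹ • M.discLap (ut (n+1)) K
        + M.btilde (fun L => (2:ℝ) • u n L - u (n-1) L) (ut (n+1)) K
        + M.gradh (p n) K
      = (triArea K)⁻¹ • ∫ x in triSet K, f ((n+1) * k) x) ∧
    M.IsCR (p (n+1)) ∧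
    (∑ K ∈ M.tris, ∫ x in triSet K, p (n+1) K x) = 0 ∧
    (∀ σ ∈ M.edges,
      M.divhVal (fun L => M.gradh (p (n+1)) L - M.gradh (p n) L) σ
        = (3 / (2 * k)) * M.divhVal (ut (n+1)) σ) ∧
    (∀ K ∈ M.tris,
      u (n+1) K = ut (n+1) K - (2 * k / 3) • (M.gradh (p (n+1)) K - M.gradh (p n) K))

namespace FVMesh

variable {Ω : Set E2} (M : FVMesh Ω)

lemma Kof_spec {σ : Finset E2} (h : σ ∈ M.edges) :
    M.Kof σ ∈ M.tris ∧ σ ∈ triEdges (M.Kof σ) := by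
  have hex : ∃ v, v ∈ M.tris ∧ σ ∈ triEdges v := by
    rw [FVMesh.edges, Finset.mem_biUnion] at h
    obtain ⟨v, hv, hσ⟩ := h
    exact ⟨v, hv, hσ⟩
  rw [FVMesh.Kof, dif_pos hex]
  exact hex.choose_spec

lemma Lof_spec {σ : Finset E2} (he : σ ∈ M.edges) (h : M.isIntEdge σ) :
    M.Lof σ ∈ M.tris := by
  have hcard := h.2
  have h1 : 1 < (M.tris.filter fun w => σ ∈ triEdges w).card := by omega
  obtain ⟨w, hw, hwne⟩ := Finset.exists_mem_ne h1 (M.Kof σ)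
  rw [Finset.mem_filter] at hw
  have hex : ∃ w, w ∈ M.tris ∧ σ ∈ triEdges w ∧ w ≠ M.Kof σ := ⟨w, hw.1, hw.2, hwne⟩
  rw [FVMesh.Lof, FVMesh.nbr, dif_pos hex]
  exact hex.choose_spec.1

lemma triArea_pos {v : Fin 3 → E2} (hv : v ∈ M.tris) : 0 < triArea v := by
  have hindep := M.indep v hv
  have hspan : affineSpan ℝ (Set.range v) = ⊤ := by
    rw [hindep.affineSpan_eq_top_iff_card_eq_finrank_add_one]
    simp [finrank_euclideanSpace]
  have hconv : Convex ℝ (triSet v) := convex_convexHull ℝ _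
  have hint : (interior (triSet v)).Nonempty := by
    rw [hconv.interior_nonempty_iff_affineSpan_eq_top, triSet, affineSpan_convexHull]
    exact hspan
  have hpos : 0 < volume (triSet v) := (isOpen_interior.measure_pos volume hint).trans_le (measure_mono interior_subset)
  have hfin : volume (triSet v) < ⊤ :=
    ((Set.finite_range v).isCompact_convexHull ℝ).measure_lt_top
  exact ENNReal.toReal_pos hpos.ne' hfin.ne

lemma edgeLen_pos {v : Fin 3 → E2} (hv : v ∈ M.tris) {σ : Finset E2}
    (hσ : σ ∈ triEdges v) : 0 < edgeLen σ := by
  have hinj := (M.indep v hv).injective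
  have h01 : v 0 ≠ v 1 := fun h => by simpa using hinj h
  have h12 : v 1 ≠ v 2 := fun h => by simpa using hinj h
  have h02 : v 0 ≠ v 2 := fun h => by simpa using hinj h
  rw [triEdges, Finset.mem_insert, Finset.mem_insert, Finset.mem_singleton] at hσ
  rcases hσ with h | h | h <;> subst h <;>
    · rw [edgeLen]
      simp only [Finset.coe_insert, Finset.coe_singleton, Metric.diam_pair]
      first
      | exact dist_pos.2 h01
      | exact dist_pos.2 h12
      | exact dist_pos.2 h02

end FVMesh

/-- Proposition 1: the velocities computed by the projection scheme
stay in `RT₀`. -/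
theorem stmt12 (Ω : Set E2) (hΩo : IsOpen Ω) (hΩb : Bornology.IsBounded Ω)
    (M : FVMesh Ω) (N : ℕ) (hN : 3 ≤ N) (T Re : ℝ) (hT : 0 < T) (hRe : 0 < Re)
    (k : ℝ) (hk : k = T / N) (f : ℝ → E2 → E2)
    (u ut : ℕ → P0fun) (p : ℕ → BrokenS)
    (hscheme : projScheme M N k Re f u ut p) :
    ∀ m ≤ N, M.P0inRT0 (u m) := by
  obtain ⟨h0, h1, -, -, -, hstep⟩ := hscheme
  have hNpos : (0:ℝ) < N := by
    have : (3:ℝ) ≤ N := by exact_mod_cast hN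
    linarith
  have hkpos : 0 < k := by rw [hk]; exact div_pos hT hNpos
  have hk0 : k ≠ 0 := hkpos.ne'
  intro m hm
  match m with
  | 0 => exact h0
  | 1 => exact h1
  | (n+2) =>
    obtain ⟨-, -, -, hpres, hcorr⟩ := hstep (n+1) (by omega) (by omega)
    have hmul : 2 * k * (3 / (2 * k)) = 3 := by field_simp
    constructor
    · -- interior edges
      intro σ hσ
      rw [FVMesh.intEdges, Finset.mem_filter] at hσ
      obtain ⟨hσe, hint⟩ := hσ
      obtain ⟨hK, hKσ⟩ := M.Kof_spec hσe
      have hL := M.Lof_spec hσe hint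
      have hAK := M.triArea_pos hK
      have hAL := M.triArea_pos hL
      have hlen := M.edgeLen_pos hK hKσ
      have hcoef : (3 * edgeLen σ / (triArea (M.Kof σ) + triArea (M.Lof σ))) ≠ 0 :=
        ne_of_gt (div_pos (by linarith) (by linarith))
      have hp := hpres σ hσe
      simp only [FVMesh.divhVal, if_pos hint] at hp
      rw [hcorr _ hK, hcorr _ hL]
      set nn := M.nrm (M.Kof σ) σ
      set a1 := M.gradh (p (n + 1 + 1)) (M.Lof σ)
      set a2 := M.gradh (p (n + 1)) (M.Lof σ)
      set a3 := M.gradh (p (n + 1 + 1)) (M.Kof σ)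
      set a4 := M.gradh (p (n + 1)) (M.Kof σ)
      set b1 := ut (n + 1 + 1) (M.Lof σ)
      set b2 := ut (n + 1 + 1) (M.Kof σ)
      have hp' : (inner ℝ (a1 - a2 - (a3 - a4)) nn : ℝ) = 3 / (2 * k) * inner ℝ (b1 - b2) nn :=
        mul_left_cancel₀ hcoef (by linear_combination hp)
      have hp2 : 2 * k * (inner ℝ (a1 - a2 - (a3 - a4)) nn : ℝ)
          = 3 * (inner ℝ (b1 - b2) nn : ℝ) := by
        rw [hp', ← mul_assoc, hmul]
      simp only [inner_sub_left, real_inner_smul_left] at hp2 ⊢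
      linear_combination hp2 / 3
    · -- boundary edges
      intro σ hσ
      rw [FVMesh.extEdges, Finset.mem_filter] at hσ
      obtain ⟨hσe, hext⟩ := hσ
      have hnotint : ¬ M.isIntEdge σ := by
        intro h
        have h2 := h.2
        have h1 := hext.2
        omega
      obtain ⟨hK, hKσ⟩ := M.Kof_spec hσe
      have hAK := M.triArea_pos hK
      have hlen := M.edgeLen_pos hK hKσ
      have hcoef : (-(3 * edgeLen σ / triArea (M.Kof σ))) ≠ 0 :=
        neg_ne_zero.2 (ne_of_gt (div_pos (by linarith) hAK))
      have hp := hpres σ hσe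
      simp only [FVMesh.divhVal, if_neg hnotint] at hp
      rw [hcorr _ hK]
      set nn := M.nrm (M.Kof σ) σ
      set a3 := M.gradh (p (n + 1 + 1)) (M.Kof σ)
      set a4 := M.gradh (p (n + 1)) (M.Kof σ)
      set b2 := ut (n + 1 + 1) (M.Kof σ)
      have hp' : (inner ℝ (a3 - a4) nn : ℝ) = 3 / (2 * k) * inner ℝ b2 nn :=
        mul_left_cancel₀ hcoef (by linear_combination hp)
      have hp2 : 2 * k * (inner ℝ (a3 - a4) nn : ℝ) = 3 * (inner ℝ b2 nn : ℝ) := by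
        rw [hp', ← mul_assoc, hmul]
      simp only [inner_sub_left, real_inner_smul_left] at hp2 ⊢
      linear_combination -hp2 / 3

end
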